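/- arXiv:1810.00994 — 5 statements merged into one kernel-verified Lean document; each statement's English description precedes it below -/
import Mathlib

section
/- A two-qubit unitary U ∈ U(4) is non-entangling (i.e., U(u⊗v) is a product vector for every u, v ∈ ℂ²) if and only if there exists a phase φ ∈ ℝ such that e^{iφ}⟨Φ_i|U|Φ_j⟩ is real for all i, j ∈ {0,1,2,3}, i.e., up to an overall phase U is a real matrix when expressed in the magic basis. -/
open Matrix Complex
open scoped Matrix Kronecker

noncomputable section

def ketv (i j : Fin 2) : Fin 2 × Fin 2 → ℂ := fun x => if x = (i, j) then 1 else 0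

/-- The magic basis of ℂ²⊗ℂ². -/
def magic : Fin 4 → (Fin 2 × Fin 2 → ℂ) :=
  ![(Real.sqrt 2 : ℂ)⁻¹ • (ketv 0 0 + ketv 1 1),
    (-I) • ((Real.sqrt 2 : ℂ)⁻¹ • (ketv 0 0 - ketv 1 1)),
    (-I) • ((Real.sqrt 2 : ℂ)⁻¹ • (ketv 0 1 + ketv 1 0)),
    (Real.sqrt 2 : ℂ)⁻¹ • (ketv 0 1 - ketv 1 0)]

/-- A vector of ℂ²⊗ℂ² is a product vector if it equals u⊗v for some u, v ∈ ℂ². -/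
def IsProductVec (v : Fin 2 × Fin 2 → ℂ) : Prop :=
  ∃ u w : Fin 2 → ℂ, v = fun x => u x.1 * w x.2

/-! ### Auxiliary lemmas -/

def det2 (v : Fin 2 × Fin 2 → ℂ) : ℂ := v (0,0) * v (1,1) - v (0,1) * v (1,0)

lemma sqrt2_sq : ((Real.sqrt 2 : ℝ) : ℂ) * ((Real.sqrt 2 : ℝ) : ℂ) = 2 := by
  norm_cast; exact Real.mul_self_sqrt (by norm_num)

lemma sqrt2_sq' : ((Real.sqrt 2 : ℝ) : ℂ)^2 = 2 := by rw [sq]; exact sqrt2_sq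

lemma sqrt2_inv : ((Real.sqrt 2 : ℝ) : ℂ)⁻¹ = ((Real.sqrt 2 : ℝ) : ℂ) / 2 := by
  field_simp
  linear_combination (-1 : ℂ) * sqrt2_sq

lemma magicB (v : Fin 2 × Fin 2 → ℂ) :
    ∑ i : Fin 4, (star (magic i) ⬝ᵥ v)^2 = 2 * det2 v := by
  have h2 : ((Real.sqrt 2 : ℝ) : ℂ) ≠ 0 := by
    simp [Real.sqrt_eq_zero']
  unfold det2
  simp only [Fin.sum_univ_four, magic, dotProduct, Fintype.sum_prod_type,
    Fin.sum_univ_two, ketv, Pi.star_apply, Pi.smul_apply, Pi.add_apply, Pi.sub_apply,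
    Matrix.cons_val_zero, Matrix.cons_val_one, Matrix.head_cons, Matrix.cons_val_two,
    Matrix.cons_val_three, Matrix.tail_cons, smul_eq_mul, star_mul', star_neg,
    Complex.star_def, Complex.conj_I, map_inv₀, Complex.conj_ofReal]
  norm_num [Prod.ext_iff]
  field_simp
  ring_nf
  rw [Complex.I_sq]
  ring_nf
  rw [sqrt2_sq']
  ring

lemma magicParseval (v w : Fin 2 × Fin 2 → ℂ) :
    ∑ i : Fin 4, (starRingEnd ℂ) (star (magic i) ⬝ᵥ v) * (star (magic i) ⬝ᵥ w)
      = star v ⬝ᵥ w := by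
  have h2 := sqrt2_sq'
  have h3 : ((Real.sqrt 2 : ℝ) : ℂ)^3 = 2 * ((Real.sqrt 2 : ℝ) : ℂ) := by
    rw [show (((Real.sqrt 2 : ℝ) : ℂ))^3
      = ((Real.sqrt 2 : ℝ) : ℂ)^2 * ((Real.sqrt 2 : ℝ) : ℂ) by ring, h2]
  have h4 : ((Real.sqrt 2 : ℝ) : ℂ)^4 = 4 := by
    rw [show (((Real.sqrt 2 : ℝ) : ℂ))^4 = (((Real.sqrt 2 : ℝ) : ℂ)^2)^2 by ring, h2]; norm_num
  simp only [Fin.sum_univ_four, magic, dotProduct, Fintype.sum_prod_type,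
    Fin.sum_univ_two, ketv, Pi.star_apply, Pi.smul_apply, Pi.add_apply, Pi.sub_apply,
    Matrix.cons_val_zero, Matrix.cons_val_one, Matrix.head_cons, Matrix.cons_val_two,
    Matrix.cons_val_three, Matrix.tail_cons, smul_eq_mul, star_mul', star_neg,
    Complex.star_def, Complex.conj_I, map_inv₀, Complex.conj_ofReal, _root_.map_mul, map_add,
    map_sub, map_neg, Complex.conj_conj, sqrt2_inv]
  norm_num [Prod.ext_iff]
  ring_nf
  simp only [Complex.I_sq, h2, h3, h4, map_ofNat]
  ring

set_option maxHeartbeats 1000000 in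
lemma magicOrtho (i j : Fin 4) :
    star (magic i) ⬝ᵥ magic j = if i = j then 1 else 0 := by
  have h2 := sqrt2_sq'
  fin_cases i <;> fin_cases j <;>
  · simp only [Fin.isValue, Fin.zero_eta, Fin.mk_one, magic, dotProduct, Fintype.sum_prod_type,
      Fin.sum_univ_two, ketv, Pi.star_apply, Pi.smul_apply, Pi.add_apply, Pi.sub_apply,
      Matrix.cons_val_zero, Matrix.cons_val_one, Matrix.head_cons, Matrix.cons_val_two,
      Matrix.cons_val_three, Matrix.tail_cons, smul_eq_mul, star_mul', star_neg,
      Complex.star_def, Complex.conj_I, map_inv₀, Complex.conj_ofReal, sqrt2_inv]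
    norm_num [ketv, Prod.ext_iff, Fin.ext_iff] <;>
    ring_nf <;>
    simp only [Complex.I_sq, h2, map_ofNat] <;>
    ring_nf

set_option maxHeartbeats 1000000 in
lemma magicComplete (v : Fin 2 × Fin 2 → ℂ) (x : Fin 2 × Fin 2) :
    ∑ i : Fin 4, (star (magic i) ⬝ᵥ v) * magic i x = v x := by
  have h2 := sqrt2_sq'
  obtain ⟨a, b⟩ := x
  fin_cases a <;> fin_cases b <;>
  · simp only [Fin.isValue, Fin.zero_eta, Fin.mk_one, Fin.sum_univ_four, magic, dotProduct,
      Fintype.sum_prod_type, Fin.sum_univ_two, ketv, Pi.star_apply, Pi.smul_apply, Pi.add_apply,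
      Pi.sub_apply, Matrix.cons_val_zero, Matrix.cons_val_one, Matrix.head_cons,
      Matrix.cons_val_two, Matrix.cons_val_three, Matrix.tail_cons, smul_eq_mul, star_mul',
      star_neg, Complex.star_def, Complex.conj_I, map_inv₀, Complex.conj_ofReal, sqrt2_inv]
    norm_num [ketv, Prod.ext_iff, Fin.ext_iff] <;>
    ring_nf <;>
    simp only [Complex.I_sq, h2, map_ofNat] <;>
    ring_nf

lemma isProduct_iff (v : Fin 2 × Fin 2 → ℂ) : IsProductVec v ↔ det2 v = 0 := by
  constructor
  · rintro ⟨u, w, rfl⟩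
    simp only [det2]
    ring
  · intro h
    simp only [det2] at h
    by_cases h00 : v (0,0) = 0
    · by_cases h01 : v (0,1) = 0
      · refine ⟨![0,1], ![v (1,0), v (1,1)], ?_⟩
        funext x
        obtain ⟨a, b⟩ := x
        fin_cases a <;> fin_cases b
        · show v (0,0) = 0 * v (1,0); rw [zero_mul]; exact h00
        · show v (0,1) = 0 * v (1,1); rw [zero_mul]; exact h01
        · show v (1,0) = 1 * v (1,0); rw [one_mul]
        · show v (1,1) = 1 * v (1,1); rw [one_mul]
      · have h10 : v (1,0) = 0 := by
          have hz : v (0,1) * v (1,0) = 0 := by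
            linear_combination v (1,1) * h00 - h
          exact (mul_eq_zero.mp hz).resolve_left h01
        refine ⟨![v (0,1), v (1,1)], ![0, 1], ?_⟩
        funext x
        obtain ⟨a, b⟩ := x
        fin_cases a <;> fin_cases b
        · show v (0,0) = v (0,1) * 0; rw [mul_zero]; exact h00
        · show v (0,1) = v (0,1) * 1; rw [mul_one]
        · show v (1,0) = v (1,1) * 0; rw [mul_zero]; exact h10
        · show v (1,1) = v (1,1) * 1; rw [mul_one]
    · refine ⟨![v (0,0), v (1,0)], ![1, v (0,1) / v (0,0)], ?_⟩
      funext x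
      obtain ⟨a, b⟩ := x
      fin_cases a <;> fin_cases b
      · show v (0,0) = v (0,0) * 1; rw [mul_one]
      · show v (0,1) = v (0,0) * (v (0,1) / v (0,0))
        rw [mul_comm, div_mul_cancel₀ _ h00]
      · show v (1,0) = v (1,0) * 1; rw [mul_one]
      · show v (1,1) = v (1,0) * (v (0,1) / v (0,0))
        rw [eq_comm, ← mul_div_assoc, div_eq_iff h00]
        linear_combination -h

/-- If `M` is unitary and `MᵀM` is scalar, then some phase makes `M` real. -/
lemma phase_aux (M : Matrix (Fin 4) (Fin 4) ℂ) (lam : ℂ)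
    (h1 : Mᴴ * M = 1) (h2 : Mᵀ * M = lam • (1 : Matrix (Fin 4) (Fin 4) ℂ)) :
    ∃ φ : ℝ, ∀ i j : Fin 4, (Complex.exp (I * φ) * M i j).im = 0 := by
  have h3 : M * Mᴴ = 1 := mul_eq_one_comm.mp h1
  have h4 : Mᵀ = lam • Mᴴ := by
    calc Mᵀ = Mᵀ * (M * Mᴴ) := by rw [h3, Matrix.mul_one]
      _ = Mᵀ * M * Mᴴ := by rw [Matrix.mul_assoc]
      _ = (lam • (1 : Matrix (Fin 4) (Fin 4) ℂ)) * Mᴴ := by rw [h2]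
      _ = lam • Mᴴ := by rw [Matrix.smul_mul, Matrix.one_mul]
  have hent : ∀ i j, M i j = lam * (starRingEnd ℂ) (M i j) := by
    intro i j
    have h5 := congrFun (congrFun h4 j) i
    simpa [Matrix.transpose_apply, Matrix.conjTranspose_apply, Matrix.smul_apply,
      smul_eq_mul, Complex.star_def] using h5
  have hnz : ∃ i : Fin 4, M i 0 ≠ 0 := by
    by_contra hc
    push_neg at hc
    have h6 := congrFun (congrFun h1 0) 0
    simp [Matrix.mul_apply, Matrix.conjTranspose_apply, Matrix.one_apply, hc] at h6
  obtain ⟨i0, hi0⟩ := hnz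
  have hlu : lam * (starRingEnd ℂ) lam = 1 := by
    have e1 := hent i0 0
    have e2 : (starRingEnd ℂ) (M i0 0) = (starRingEnd ℂ) lam * M i0 0 := by
      conv_lhs => rw [e1]
      rw [_root_.map_mul, Complex.conj_conj]
    have e3 : M i0 0 = lam * ((starRingEnd ℂ) lam * M i0 0) := by rw [← e2, ← e1]
    have e4 : (lam * (starRingEnd ℂ) lam - 1) * M i0 0 = 0 := by linear_combination -e3
    rcases mul_eq_zero.mp e4 with h | h
    · linear_combination h
    · exact absurd h hi0
  have hnsq : Complex.normSq lam = 1 := by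
    have h7 : ((Complex.normSq lam : ℝ) : ℂ) = 1 := by
      rw [← Complex.mul_conj]; exact hlu
    exact_mod_cast h7
  have habs : ‖lam‖ = 1 := by
    rw [Complex.norm_def, hnsq, Real.sqrt_one]
  have hlamexp : Complex.exp (↑(Complex.arg lam) * I) = lam := by
    conv_rhs => rw [← Complex.norm_mul_exp_arg_mul_I lam]
    rw [habs, Complex.ofReal_one, one_mul]
  refine ⟨-(Complex.arg lam)/2, fun i j => ?_⟩
  rw [← Complex.conj_eq_iff_im]
  have hc1 : (starRingEnd ℂ) (M i j) = (starRingEnd ℂ) lam * M i j := by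
    conv_lhs => rw [hent i j]
    rw [_root_.map_mul, Complex.conj_conj]
  rw [_root_.map_mul, hc1]
  have hc2 : (starRingEnd ℂ) (Complex.exp (I * ↑(-(Complex.arg lam)/2))) * (starRingEnd ℂ) lam
      = Complex.exp (I * ↑(-(Complex.arg lam)/2)) := by
    rw [show (starRingEnd ℂ) lam = (starRingEnd ℂ) (Complex.exp (↑(Complex.arg lam) * I)) from
      by rw [hlamexp]]
    rw [← Complex.exp_conj, ← Complex.exp_conj, ← Complex.exp_add]
    congr 1
    simp only [_root_.map_mul, Complex.conj_I, Complex.conj_ofReal]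
    push_cast
    ring
  rw [← mul_assoc, hc2]

/-- Proposition 4 of the paper: a two-qubit unitary U is non-entangling iff, up to an
overall phase, U is a real matrix when expressed in the magic basis. -/
theorem nonentangling_iff_real_in_magic_basis (U : Matrix (Fin 2 × Fin 2) (Fin 2 × Fin 2) ℂ)
    (hU : U ∈ Matrix.unitaryGroup (Fin 2 × Fin 2) ℂ) :
    (∀ u w : Fin 2 → ℂ, IsProductVec (U.mulVec fun x => u x.1 * w x.2)) ↔
      ∃ φ : ℝ, ∀ i j : Fin 4,
        (Complex.exp (I * φ) * (star (magic i) ⬝ᵥ U.mulVec (magic j))).im = 0 := by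
  have hUU : Uᴴ * U = 1 := by
    have := hU.1
    rwa [Matrix.star_eq_conjTranspose] at this
  have hun : ∀ x y : Fin 2 × Fin 2 → ℂ,
      star (U.mulVec x) ⬝ᵥ U.mulVec y = star x ⬝ᵥ y := by
    intro x y
    rw [Matrix.star_mulVec, Matrix.dotProduct_mulVec, Matrix.vecMul_vecMul, hUU,
      Matrix.vecMul_one]
  -- M is unitary: Mᴴ M = 1 entrywise
  have hH : ∀ j k : Fin 4, ∑ i : Fin 4,
      (starRingEnd ℂ) (star (magic i) ⬝ᵥ U.mulVec (magic j)) * (star (magic i) ⬝ᵥ U.mulVec (magic k))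
      = if j = k then 1 else 0 := by
    intro j k
    rw [magicParseval (U.mulVec (magic j)) (U.mulVec (magic k)), hun, magicOrtho]
  -- determinant of the magic vectors
  have hdm : ∀ j : Fin 4, det2 (magic j) = 2⁻¹ := by
    intro j
    have hb := magicB (magic j)
    simp only [magicOrtho] at hb
    have hsq : ∀ i : Fin 4, ((if i = j then (1:ℂ) else 0))^2 = (if i = j then 1 else 0) := by
      intro i; by_cases hij : i = j <;> simp [hij]
    rw [Finset.sum_congr rfl (fun i _ => hsq i)] at hb
    simp only [Finset.sum_ite_eq' Finset.univ, Finset.mem_univ, if_true] at hb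
    linear_combination -hb/2
  constructor
  · -- forward direction
    intro h
    have hdet : ∀ u w : Fin 2 → ℂ, det2 (U.mulVec fun x => u x.1 * w x.2) = 0 :=
      fun u w => (isProduct_iff _).mp (h u w)
    -- the key quadratic identity
    have key : ∃ lam : ℂ, ∀ v : Fin 2 × Fin 2 → ℂ,
        det2 (U.mulVec v) = lam * det2 v := by
      have E1 := hdet ![1,0] ![1,0]
      have E2 := hdet ![1,0] ![0,1]
      have E3 := hdet ![0,1] ![1,0]
      have E4 := hdet ![0,1] ![0,1]
      have F1 := hdet ![1,0] ![1,1]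
      have F2 := hdet ![1,1] ![1,0]
      have F3 := hdet ![1,1] ![0,1]
      have F4 := hdet ![0,1] ![1,1]
      have G1 := hdet ![1,1] ![1,1]
      simp only [det2, mulVec, dotProduct, Fintype.sum_prod_type, Fin.sum_univ_two,
        Matrix.cons_val_zero, Matrix.cons_val_one, Matrix.head_cons]
        at E1 E2 E3 E4 F1 F2 F3 F4 G1
      refine ⟨(U (0,0) (0,0) * U (1,1) (0,0) - U (0,1) (0,0) * U (1,0) (0,0))
        + (U (0,0) (0,0) * U (1,1) (1,1) - U (0,1) (0,0) * U (1,0) (1,1))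
        + (U (0,0) (1,1) * U (1,1) (0,0) - U (0,1) (1,1) * U (1,0) (0,0))
        + (U (0,0) (1,1) * U (1,1) (1,1) - U (0,1) (1,1) * U (1,0) (1,1)), ?_⟩
      intro v
      simp only [det2, mulVec, dotProduct, Fintype.sum_prod_type, Fin.sum_univ_two]
      linear_combination
        (v (0,0)^2 - v (0,0)*v (1,1) - v (0,0)*v (0,1) - v (0,0)*v (1,0)
          + 2*v (0,1)*v (1,0)) * E1
        + (v (0,1)^2 - v (0,0)*v (0,1) - v (0,1)*v (1,1) + v (0,1)*v (1,0)) * E2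
        + (v (1,0)^2 - v (0,0)*v (1,0) - v (1,0)*v (1,1) + v (0,1)*v (1,0)) * E3
        + (v (1,1)^2 - v (0,0)*v (1,1) - v (0,1)*v (1,1) - v (1,0)*v (1,1)
          + 2*v (0,1)*v (1,0)) * E4
        + (v (0,0)*v (0,1) - v (0,1)*v (1,0)) * F1
        + (v (0,0)*v (1,0) - v (0,1)*v (1,0)) * F2
        + (v (0,1)*v (1,1) - v (0,1)*v (1,0)) * F3
        + (v (1,0)*v (1,1) - v (0,1)*v (1,0)) * F4
        + (v (0,1)*v (1,0)) * G1
    obtain ⟨lam, hlam⟩ := key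
    -- diagonal of MᵀM
    have hdiag : ∀ j : Fin 4, ∑ i : Fin 4, (star (magic i) ⬝ᵥ U.mulVec (magic j))^2 = lam := by
      intro j
      have hb := magicB (U.mulVec (magic j))
      rw [hlam, hdm] at hb
      linear_combination hb
    -- MᵀM = lam • 1 entrywise
    have hT : ∀ j k : Fin 4, ∑ i : Fin 4,
        (star (magic i) ⬝ᵥ U.mulVec (magic j)) * (star (magic i) ⬝ᵥ U.mulVec (magic k))
        = if j = k then lam else 0 := by
      intro j k
      by_cases hjk : j = k
      · subst hjk
        simp only [if_pos rfl]
        have hd := hdiag j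
        calc ∑ i : Fin 4, (star (magic i) ⬝ᵥ U.mulVec (magic j)) * (star (magic i) ⬝ᵥ U.mulVec (magic j))
            = ∑ i : Fin 4, (star (magic i) ⬝ᵥ U.mulVec (magic j))^2 :=
              Finset.sum_congr rfl fun i _ => (pow_two _).symm
          _ = lam := hd
      · simp only [if_neg hjk]
        have hb := magicB (U.mulVec (magic j + magic k))
        rw [hlam] at hb
        have hdjk : det2 (magic j + magic k) = 1 := by
          have hb2 := magicB (magic j + magic k)
          have hv : ∀ i : Fin 4, (star (magic i) ⬝ᵥ (magic j + magic k))^2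
              = (if i = j then (1:ℂ) else 0) + (if i = k then 1 else 0) := by
            intro i
            rw [dotProduct_add, magicOrtho, magicOrtho]
            rcases eq_or_ne i j with h1 | h1 <;> rcases eq_or_ne i k with h2 | h2
            · exact absurd (h1.symm.trans h2) hjk
            · subst h1; simp [h2]
            · subst h2; simp [h1]
            · simp [h1, h2]
          rw [Finset.sum_congr rfl (fun i _ => hv i)] at hb2
          simp only [Finset.sum_add_distrib, Finset.sum_ite_eq' Finset.univ,
            Finset.mem_univ, if_true] at hb2
          linear_combination -hb2/2
        rw [hdjk, mul_one] at hb
        have hexp : ∀ i : Fin 4, (star (magic i) ⬝ᵥ U.mulVec (magic j + magic k))^2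
            = (star (magic i) ⬝ᵥ U.mulVec (magic j))^2
              + 2 * ((star (magic i) ⬝ᵥ U.mulVec (magic j)) * (star (magic i) ⬝ᵥ U.mulVec (magic k)))
              + (star (magic i) ⬝ᵥ U.mulVec (magic k))^2 := by
          intro i
          rw [Matrix.mulVec_add, dotProduct_add]
          ring
        rw [Finset.sum_congr rfl (fun i _ => hexp i)] at hb
        simp only [Finset.sum_add_distrib, ← Finset.mul_sum] at hb
        linear_combination hb/2 - (hdiag j)/2 - (hdiag k)/2
    -- assemble the matrix statements and apply phase_aux
    have h1 : (Matrix.of fun i j : Fin 4 => star (magic i) ⬝ᵥ U.mulVec (magic j))ᴴ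
        * (Matrix.of fun i j : Fin 4 => star (magic i) ⬝ᵥ U.mulVec (magic j)) = 1 := by
      ext j k
      simp only [Matrix.mul_apply, Matrix.conjTranspose_apply, Matrix.of_apply,
        Matrix.one_apply, Complex.star_def]
      exact hH j k
    have h2 : (Matrix.of fun i j : Fin 4 => star (magic i) ⬝ᵥ U.mulVec (magic j))ᵀ
        * (Matrix.of fun i j : Fin 4 => star (magic i) ⬝ᵥ U.mulVec (magic j))
        = lam • (1 : Matrix (Fin 4) (Fin 4) ℂ) := by
      ext j k
      simp only [Matrix.mul_apply, Matrix.transpose_apply, Matrix.of_apply,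
        Matrix.smul_apply, Matrix.one_apply, smul_eq_mul, mul_ite, mul_one, mul_zero]
      exact hT j k
    obtain ⟨φ, hφ⟩ := phase_aux _ lam h1 h2
    exact ⟨φ, fun i j => by simpa using hφ i j⟩
  · -- backward direction
    intro hphi u w
    obtain ⟨φ, hre⟩ := hphi
    rw [isProduct_iff]
    set p : Fin 2 × Fin 2 → ℂ := fun x => u x.1 * w x.2 with hp
    have hdp : det2 p = 0 := by simp only [det2, hp]; ring
    have hrel : ∀ i j : Fin 4,
        (starRingEnd ℂ) (Complex.exp (I * φ) * (star (magic i) ⬝ᵥ U.mulVec (magic j)))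
        = Complex.exp (I * φ) * (star (magic i) ⬝ᵥ U.mulVec (magic j)) :=
      fun i j => Complex.conj_eq_iff_im.mpr (hre i j)
    have hee : (starRingEnd ℂ) (Complex.exp (I * ↑φ)) * Complex.exp (I * ↑φ) = 1 := by
      have harg : (starRingEnd ℂ) (I * (φ:ℂ)) + I * (φ:ℂ) = 0 := by
        simp only [_root_.map_mul, Complex.conj_I, Complex.conj_ofReal]
        ring
      rw [← Complex.exp_conj, ← Complex.exp_add, harg, Complex.exp_zero]
    have hmm : ∀ j k : Fin 4, ∑ i : Fin 4,
        (star (magic i) ⬝ᵥ U.mulVec (magic j)) * (star (magic i) ⬝ᵥ U.mulVec (magic k))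
        = ((starRingEnd ℂ) (Complex.exp (I * ↑φ)))^2 * (if j = k then 1 else 0) := by
      intro j k
      calc ∑ i : Fin 4, (star (magic i) ⬝ᵥ U.mulVec (magic j)) * (star (magic i) ⬝ᵥ U.mulVec (magic k))
          = ∑ i : Fin 4, ((starRingEnd ℂ) (Complex.exp (I * ↑φ)))^2
            * ((starRingEnd ℂ) (Complex.exp (I * ↑φ) * (star (magic i) ⬝ᵥ U.mulVec (magic j)))
              * (Complex.exp (I * ↑φ) * (star (magic i) ⬝ᵥ U.mulVec (magic k)))) := by
            refine Finset.sum_congr rfl fun i _ => ?_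
            rw [hrel i j]
            linear_combination (-((star (magic i) ⬝ᵥ U.mulVec (magic j)) * (star (magic i) ⬝ᵥ U.mulVec (magic k)))
              * (1 + (starRingEnd ℂ) (Complex.exp (I * ↑φ)) * Complex.exp (I * ↑φ))) * hee
        _ = ((starRingEnd ℂ) (Complex.exp (I * ↑φ)))^2 * ∑ i : Fin 4,
            (starRingEnd ℂ) (Complex.exp (I * ↑φ) * (star (magic i) ⬝ᵥ U.mulVec (magic j)))
              * (Complex.exp (I * ↑φ) * (star (magic i) ⬝ᵥ U.mulVec (magic k))) := by
            rw [Finset.mul_sum]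
        _ = ((starRingEnd ℂ) (Complex.exp (I * ↑φ)))^2 * ∑ i : Fin 4,
            (starRingEnd ℂ) (star (magic i) ⬝ᵥ U.mulVec (magic j)) * (star (magic i) ⬝ᵥ U.mulVec (magic k)) := by
            refine congrArg _ (Finset.sum_congr rfl fun i _ => ?_)
            rw [_root_.map_mul]
            linear_combination ((starRingEnd ℂ) (star (magic i) ⬝ᵥ U.mulVec (magic j))
              * (star (magic i) ⬝ᵥ U.mulVec (magic k))) * hee
        _ = ((starRingEnd ℂ) (Complex.exp (I * ↑φ)))^2 * (if j = k then 1 else 0) := by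
            rw [hH j k]
    -- expand U p in the magic basis
    have hcomp : p = (star (magic 0) ⬝ᵥ p) • magic 0 + (star (magic 1) ⬝ᵥ p) • magic 1
        + (star (magic 2) ⬝ᵥ p) • magic 2 + (star (magic 3) ⬝ᵥ p) • magic 3 := by
      funext x
      have h10 := magicComplete p x
      rw [Fin.sum_univ_four] at h10
      simp only [Pi.add_apply, Pi.smul_apply, smul_eq_mul]
      exact h10.symm
    have hexp2 : ∀ i : Fin 4, star (magic i) ⬝ᵥ U.mulVec p
        = (star (magic 0) ⬝ᵥ p) * (star (magic i) ⬝ᵥ U.mulVec (magic 0))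
          + (star (magic 1) ⬝ᵥ p) * (star (magic i) ⬝ᵥ U.mulVec (magic 1))
          + (star (magic 2) ⬝ᵥ p) * (star (magic i) ⬝ᵥ U.mulVec (magic 2))
          + (star (magic 3) ⬝ᵥ p) * (star (magic i) ⬝ᵥ U.mulVec (magic 3)) := by
      intro i
      conv_lhs => rw [hcomp]
      simp only [Matrix.mulVec_add, Matrix.mulVec_smul, dotProduct_add, dotProduct_smul,
        smul_eq_mul]
    have hgoal : 2 * det2 (U.mulVec p)
        = ((starRingEnd ℂ) (Complex.exp (I * ↑φ)))^2 * (2 * det2 p) := by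
      rw [← magicB (U.mulVec p), ← magicB p]
      have T00 := hmm 0 0
      have T01 := hmm 0 1
      have T02 := hmm 0 2
      have T03 := hmm 0 3
      have T10 := hmm 1 0
      have T11 := hmm 1 1
      have T12 := hmm 1 2
      have T13 := hmm 1 3
      have T20 := hmm 2 0
      have T21 := hmm 2 1
      have T22 := hmm 2 2
      have T23 := hmm 2 3
      have T30 := hmm 3 0
      have T31 := hmm 3 1
      have T32 := hmm 3 2
      have T33 := hmm 3 3
      rw [if_pos rfl, mul_one] at T00
      rw [if_neg (by decide : ¬(0:Fin 4) = 1), mul_zero] at T01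
      rw [if_neg (by decide : ¬(0:Fin 4) = 2), mul_zero] at T02
      rw [if_neg (by decide : ¬(0:Fin 4) = 3), mul_zero] at T03
      rw [if_neg (by decide : ¬(1:Fin 4) = 0), mul_zero] at T10
      rw [if_pos rfl, mul_one] at T11
      rw [if_neg (by decide : ¬(1:Fin 4) = 2), mul_zero] at T12
      rw [if_neg (by decide : ¬(1:Fin 4) = 3), mul_zero] at T13
      rw [if_neg (by decide : ¬(2:Fin 4) = 0), mul_zero] at T20
      rw [if_neg (by decide : ¬(2:Fin 4) = 1), mul_zero] at T21
      rw [if_pos rfl, mul_one] at T22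
      rw [if_neg (by decide : ¬(2:Fin 4) = 3), mul_zero] at T23
      rw [if_neg (by decide : ¬(3:Fin 4) = 0), mul_zero] at T30
      rw [if_neg (by decide : ¬(3:Fin 4) = 1), mul_zero] at T31
      rw [if_neg (by decide : ¬(3:Fin 4) = 2), mul_zero] at T32
      rw [if_pos rfl, mul_one] at T33
      rw [Fin.sum_univ_four, Fin.sum_univ_four, hexp2 0, hexp2 1, hexp2 2, hexp2 3]
      rw [Fin.sum_univ_four] at T00 T01 T02 T03 T10 T11 T12 T13 T20 T21 T22 T23 T30 T31 T32 T33
      linear_combination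
        ((star (magic 0) ⬝ᵥ p) * (star (magic 0) ⬝ᵥ p)) * T00
        + ((star (magic 0) ⬝ᵥ p) * (star (magic 1) ⬝ᵥ p)) * T01
        + ((star (magic 0) ⬝ᵥ p) * (star (magic 2) ⬝ᵥ p)) * T02
        + ((star (magic 0) ⬝ᵥ p) * (star (magic 3) ⬝ᵥ p)) * T03
        + ((star (magic 1) ⬝ᵥ p) * (star (magic 0) ⬝ᵥ p)) * T10
        + ((star (magic 1) ⬝ᵥ p) * (star (magic 1) ⬝ᵥ p)) * T11
        + ((star (magic 1) ⬝ᵥ p) * (star (magic 2) ⬝ᵥ p)) * T12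
        + ((star (magic 1) ⬝ᵥ p) * (star (magic 3) ⬝ᵥ p)) * T13
        + ((star (magic 2) ⬝ᵥ p) * (star (magic 0) ⬝ᵥ p)) * T20
        + ((star (magic 2) ⬝ᵥ p) * (star (magic 1) ⬝ᵥ p)) * T21
        + ((star (magic 2) ⬝ᵥ p) * (star (magic 2) ⬝ᵥ p)) * T22
        + ((star (magic 2) ⬝ᵥ p) * (star (magic 3) ⬝ᵥ p)) * T23
        + ((star (magic 3) ⬝ᵥ p) * (star (magic 0) ⬝ᵥ p)) * T30
        + ((star (magic 3) ⬝ᵥ p) * (star (magic 1) ⬝ᵥ p)) * T31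
        + ((star (magic 3) ⬝ᵥ p) * (star (magic 2) ⬝ᵥ p)) * T32
        + ((star (magic 3) ⬝ᵥ p) * (star (magic 3) ⬝ᵥ p)) * T33
    linear_combination hgoal/2 + (((starRingEnd ℂ) (Complex.exp (I * ↑φ)))^2) * hdp

end
end

section
/- Let ψ = Σ_{k=0}^{3} c_k|Φ_k⟩ be a nonzero vector of ℂ²⊗ℂ² expanded in the magic basis. Then ψ is a product vector (ψ = u⊗v for some u, v ∈ ℂ²) if and only if Σ_{k=0}^{3} c_k² = 0 (the sum of the squares, not squared moduli, of the coefficients vanishes). -/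
open Matrix Complex
open scoped Matrix

noncomputable section

/-! A vector of ℂ²⊗ℂ² is a product vector exactly when its 2 × 2 coefficient matrix has rank at
most one, i.e. zero determinant. Expanded in the magic basis that matrix is
(1/√2)·[[c₀ − i c₁, c₃ − i c₂], [−c₃ − i c₂, c₀ + i c₁]], whose determinant is (Σ c_k²)/2. -/

theorem exists_eq_mul_iff_det_eq_zero {K : Type*} [Field K] (v : Fin 2 × Fin 2 → K) :
    (∃ u w : Fin 2 → K, v = fun x => u x.1 * w x.2) ↔ (of (Function.curry v)).det = 0 := by
  rw [det_fin_two]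
  simp only [of_apply, Function.curry_apply]
  constructor
  · rintro ⟨u, w, rfl⟩
    ring
  · intro hdet
    by_cases h00 : v (0, 0) = 0
    · rcases mul_eq_zero.mp (by simpa [h00] using hdet : v (0, 1) * v (1, 0) = 0) with h01 | h10
      · refine ⟨![0, 1], ![v (1, 0), v (1, 1)], funext fun ⟨i, j⟩ => ?_⟩
        fin_cases i <;> fin_cases j <;> simp [h00, h01]
      · refine ⟨![v (0, 1), v (1, 1)], ![0, 1], funext fun ⟨i, j⟩ => ?_⟩
        fin_cases i <;> fin_cases j <;> simp [h00, h10]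
    · refine ⟨![v (0, 0), v (1, 0)], ![1, v (0, 1) / v (0, 0)], funext fun ⟨i, j⟩ => ?_⟩
      fin_cases i <;> fin_cases j <;>
        simp only [Fin.zero_eta, Fin.mk_one, Fin.isValue, cons_val_zero, cons_val_one,
          cons_val_fin_one, mul_one] <;>
        field_simp
      linear_combination hdet

theorem of_curry_sum_smul_magic (c : Fin 4 → ℂ) :
    of (Function.curry (∑ k, c k • magic k)) =
      (Real.sqrt 2 : ℂ)⁻¹ • !![c 0 - I * c 1, c 3 - I * c 2; -c 3 - I * c 2, c 0 + I * c 1] := by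
  ext i j
  fin_cases i <;> fin_cases j <;> simp [Fin.sum_univ_four, magic, ketv] <;> ring

theorem det_of_curry_sum_smul_magic (c : Fin 4 → ℂ) :
    (of (Function.curry (∑ k, c k • magic k))).det = (∑ k, c k ^ 2) / 2 := by
  have hsqrt : ((Real.sqrt 2 : ℂ)⁻¹) ^ 2 = 2⁻¹ := by
    rw [inv_pow, ← ofReal_pow, Real.sq_sqrt zero_le_two, ofReal_ofNat]
  rw [of_curry_sum_smul_magic, det_smul, det_fin_two_of, Fintype.card_fin, hsqrt,
    Fin.sum_univ_four]
  linear_combination (-2⁻¹ * (c 1 ^ 2 + c 2 ^ 2)) * I_sq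

theorem product_iff_sum_sq_coeffs_zero_general (c : Fin 4 → ℂ) :
    IsProductVec (∑ k, c k • magic k) ↔ ∑ k, (c k) ^ 2 = 0 := by
  rw [IsProductVec, exists_eq_mul_iff_det_eq_zero, det_of_curry_sum_smul_magic, div_eq_zero_iff,
    or_iff_left two_ne_zero]

/-- A nonzero vector ψ = Σ_k c_k|Φ_k⟩ expanded in the magic basis is a product vector iff
the sum of the squares of its coefficients vanishes. -/
theorem product_iff_sum_sq_coeffs_zero (c : Fin 4 → ℂ)
    (hne : (∑ k, c k • magic k) ≠ 0) :
    IsProductVec (∑ k, c k • magic k) ↔ ∑ k, (c k) ^ 2 = 0 :=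
  product_iff_sum_sq_coeffs_zero_general c

end
end

section
/- For every single-qubit unitary V ∈ U(2) there exists a real phase φ such that all matrix elements e^{iφ}⟨Φ_i|(I₂⊗V)|Φ_j⟩, i, j ∈ {0,1,2,3}, are real; likewise there exists a real phase φ' such that all matrix elements e^{iφ'}⟨Φ_i|(V⊗I₂)|Φ_j⟩ are real. That is, every product unitary of the form I⊗V or V⊗I is, up to an overall phase, a real matrix in the magic basis. -/
open Matrix Complex
open scoped Matrix Kronecker

noncomputable section

/-!
Write `ε = !![0, 1; -1, 0] = iσ_y`. Complex conjugation of coordinates in the magic basis is, in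
the computational basis, the antiunitary map `ψ ↦ (ε ⊗ ε) ψ̄`, since every magic vector is fixed
by it. For a 2 × 2 unitary `V` the adjugate formula for `V⁻¹ = Vᴴ` gives `εᴴ V̄ ε = V / det V`.
Hence the magic-basis matrix `M` of `A ⊗ B` satisfies `M̄ = M / (det A · det B)`, and multiplying
`M` by a square root of `(det A · det B)⁻¹` makes it real.
-/

lemma map_star_mul {α m n o : Type*} [CommSemiring α] [StarRing α] [Fintype n]
    (L : Matrix m n α) (M : Matrix n o α) : (L * M).map star = L.map star * M.map star :=
  Matrix.map_mul (f := starRingEnd α)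

lemma map_star_kronecker {α l m n p : Type*} [CommMagma α] [StarMul α]
    (A : Matrix l m α) (B : Matrix n p α) : (A ⊗ₖ B).map star = A.map star ⊗ₖ B.map star := by
  ext; simp [kroneckerMap_apply]

def magicMatrix : Matrix (Fin 2 × Fin 2) (Fin 4) ℂ := of fun x j => magic j x

def inMagicBasis (K : Matrix (Fin 2 × Fin 2) (Fin 2 × Fin 2) ℂ) : Matrix (Fin 4) (Fin 4) ℂ :=
  magicMatrixᴴ * K * magicMatrix

lemma inMagicBasis_apply (K : Matrix (Fin 2 × Fin 2) (Fin 2 × Fin 2) ℂ) (i j : Fin 4) :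
    inMagicBasis K i j = star (magic i) ⬝ᵥ K *ᵥ magic j := by
  rw [inMagicBasis, Matrix.mul_assoc]
  simp only [mul_apply, dotProduct, mulVec, magicMatrix,
    conjTranspose_apply, of_apply, Pi.star_apply, Finset.mul_sum]

def spinFlip : Matrix (Fin 2) (Fin 2) ℂ := !![0, 1; -1, 0]

lemma map_star_magicMatrix : magicMatrix.map star = (spinFlip ⊗ₖ spinFlip) * magicMatrix := by
  ext ⟨a, b⟩ j
  fin_cases a <;> fin_cases b <;> fin_cases j <;>
    simp [magicMatrix, magic, ketv, spinFlip, mul_apply, Fintype.sum_prod_type]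

lemma conjTranspose_spinFlip_mul_adjugate_transpose_mul_spinFlip (V : Matrix (Fin 2) (Fin 2) ℂ) :
    spinFlipᴴ * (adjugate V)ᵀ * spinFlip = V := by
  rw [adjugate_fin_two]
  ext i j
  fin_cases i <;> fin_cases j <;> simp [spinFlip, mul_apply]

lemma map_star_inMagicBasis (K : Matrix (Fin 2 × Fin 2) (Fin 2 × Fin 2) ℂ) :
    (inMagicBasis K).map star =
      inMagicBasis ((spinFlip ⊗ₖ spinFlip)ᴴ * K.map star * (spinFlip ⊗ₖ spinFlip)) := by
  have hQt : magicMatrixᴴ.map star = magicMatrixᴴ * (spinFlip ⊗ₖ spinFlip)ᴴ := by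
    rw [show magicMatrixᴴ.map star = (magicMatrix.map star)ᴴ by ext; simp,
      map_star_magicMatrix, conjTranspose_mul]
  simp only [inMagicBasis, map_star_mul, hQt, map_star_magicMatrix, Matrix.mul_assoc]

lemma conjTranspose_spinFlip_mul_map_star_mul_spinFlip {V : Matrix (Fin 2) (Fin 2) ℂ}
    (hV : V ∈ unitaryGroup (Fin 2) ℂ) :
    spinFlipᴴ * V.map star * spinFlip = V.det⁻¹ • V := by
  have hinv : V⁻¹ = Vᴴ := inv_eq_left_inv (mem_unitaryGroup_iff'.mp hV)
  rw [← conjTranspose_transpose, ← hinv, Matrix.inv_def, Ring.inverse_eq_inv', transpose_smul,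
    Matrix.mul_smul, Matrix.smul_mul, conjTranspose_spinFlip_mul_adjugate_transpose_mul_spinFlip]

lemma map_star_inMagicBasis_kronecker {A B : Matrix (Fin 2) (Fin 2) ℂ}
    (hA : A ∈ unitaryGroup (Fin 2) ℂ) (hB : B ∈ unitaryGroup (Fin 2) ℂ) :
    (inMagicBasis (A ⊗ₖ B)).map star = (A.det * B.det)⁻¹ • inMagicBasis (A ⊗ₖ B) := by
  rw [map_star_inMagicBasis, map_star_kronecker, conjTranspose_kronecker, ← mul_kronecker_mul,
    ← mul_kronecker_mul, conjTranspose_spinFlip_mul_map_star_mul_spinFlip hA,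
    conjTranspose_spinFlip_mul_map_star_mul_spinFlip hB, smul_kronecker, kronecker_smul, smul_smul]
  simp only [inMagicBasis, Matrix.mul_smul, Matrix.smul_mul, mul_inv]

lemma exists_phase_im_mul_eq_zero {d : ℂ} (hd : ‖d‖ = 1) :
    ∃ φ : ℝ, ∀ z : ℂ, star z = d⁻¹ * z → (exp (I * φ) * z).im = 0 := by
  refine ⟨-d.arg / 2, fun z hz => ?_⟩
  have hd₀ : d ≠ 0 := norm_ne_zero_iff.mp (hd ▸ one_ne_zero)
  have hexp : exp (d.arg * I) = d := by simpa [hd] using norm_mul_exp_arg_mul_I d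
  have hphase : star (exp (I * ↑(-d.arg / 2))) = exp (I * ↑(-d.arg / 2)) * d :=
    calc star (exp (I * ↑(-d.arg / 2))) = exp (I * ↑(-d.arg / 2) + d.arg * I) := by
          rw [Complex.star_def, ← Complex.exp_conj]
          congr 1
          simp only [map_mul, conj_I, conj_ofReal]
          push_cast
          ring
      _ = exp (I * ↑(-d.arg / 2)) * d := by rw [Complex.exp_add, hexp]
  rw [← conj_eq_iff_im, map_mul, ← Complex.star_def, hphase, hz, mul_assoc,
    mul_inv_cancel_left₀ hd₀]

/-- Every product unitary of the form I⊗V or V⊗I is, up to an overall phase, a real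
matrix in the magic basis. -/
theorem product_unitary_real_in_magic_basis (V : Matrix (Fin 2) (Fin 2) ℂ)
    (hV : V ∈ Matrix.unitaryGroup (Fin 2) ℂ) :
    (∃ φ : ℝ, ∀ i j : Fin 4,
      (Complex.exp (I * φ) *
        (star (magic i) ⬝ᵥ ((1 : Matrix (Fin 2) (Fin 2) ℂ) ⊗ₖ V).mulVec (magic j))).im = 0) ∧
    (∃ φ' : ℝ, ∀ i j : Fin 4,
      (Complex.exp (I * φ') *
        (star (magic i) ⬝ᵥ (V ⊗ₖ (1 : Matrix (Fin 2) (Fin 2) ℂ)).mulVec (magic j))).im = 0) := by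
  obtain ⟨φ, hφ⟩ :=
    exists_phase_im_mul_eq_zero (CStarRing.norm_of_mem_unitary (det_of_mem_unitary hV))
  have h1 : (1 : Matrix (Fin 2) (Fin 2) ℂ) ∈ unitaryGroup (Fin 2) ℂ := one_mem _
  refine ⟨⟨φ, fun i j => hφ _ ?_⟩, ⟨φ, fun i j => hφ _ ?_⟩⟩ <;> rw [← inMagicBasis_apply]
  · simpa using congrFun₂ (map_star_inMagicBasis_kronecker h1 hV) i j
  · simpa using congrFun₂ (map_star_inMagicBasis_kronecker hV h1) i j

end
end

section
/- Let φ₀, φ₁, φ₂, φ₃ be real numbers. Then the implication [for every c ∈ ℂ⁴ with Σ_{k=0}^{3} c_k² = 0 one has Σ_{k=0}^{3} c_k² e^{2iφ_k} = 0] holds if and only if e^{2iφ₀} = e^{2iφ₁} = e^{2iφ₂} = e^{2iφ₃}, i.e., all differences φ_k − φ₀ are integer multiples of π. -/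
open Complex

/-! Testing the hypothesis on `c = e_j + i e_k`, for which `Σ c_k² = 1 + i² = 0`, yields
`e^{2iφ_j} = e^{2iφ_k}`; conversely, equal weights factor out of `Σ c_k² e^{2iφ_k}`. -/

theorem exp_two_mul_I_eq_exp_iff (x y : ℝ) :
    exp (2 * I * x) = exp (2 * I * y) ↔ ∃ n : ℤ, x - y = n * Real.pi := by
  rw [exp_eq_exp_iff_exists_int]
  refine exists_congr fun n => ?_
  rw [← sub_eq_zero, ← sub_eq_zero (a := x - y)]
  have h : 2 * I * x - (2 * I * y + n * (2 * Real.pi * I)) =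
      2 * I * ((x - y - n * Real.pi : ℝ) : ℂ) := by
    push_cast; ring
  rw [h, mul_eq_zero, ofReal_eq_zero]
  simp [I_ne_zero]

theorem sum_ite_sq_mul_eq_sub {ι : Type*} [Fintype ι] [DecidableEq ι] {j k : ι} (hjk : j ≠ k)
    (w : ι → ℂ) :
    ∑ x, (if x = j then 1 else if x = k then I else 0) ^ 2 * w x = w j - w k := by
  rw [Fintype.sum_eq_add j k hjk fun x hx => by simp [hx.1, hx.2]]
  simp [hjk.symm, I_sq, sub_eq_add_neg]

theorem forall_sum_sq_eq_zero_imp_iff {ι : Type*} [Fintype ι] (w : ι → ℂ) :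
    (∀ c : ι → ℂ, ∑ k, c k ^ 2 = 0 → ∑ k, c k ^ 2 * w k = 0) ↔ ∀ j k, w j = w k := by
  classical
  constructor
  · intro h j k
    rcases eq_or_ne j k with rfl | hjk
    · rfl
    have hc := sum_ite_sq_mul_eq_sub hjk 1
    simp only [Pi.one_apply, mul_one, sub_self] at hc
    rw [← sub_eq_zero, ← sum_ite_sq_mul_eq_sub hjk w]
    exact h _ hc
  · intro h c hc
    rcases isEmpty_or_nonempty ι with _ | ⟨⟨k⟩⟩
    · simp
    calc ∑ x, c x ^ 2 * w x = ∑ x, c x ^ 2 * w k := Finset.sum_congr rfl fun x _ => by rw [h x k]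
      _ = 0 := by rw [← Finset.sum_mul, hc, zero_mul]

/-- The non-entangling criterion for a magic-basis-diagonal unitary with eigenphases φ_k:
[every c ∈ ℂ⁴ with Σ c_k² = 0 satisfies Σ c_k² e^{2iφ_k} = 0] holds iff all differences
φ_k − φ₀ are integer multiples of π. -/
theorem sum_sq_phase_criterion (φ : Fin 4 → ℝ) :
    (∀ c : Fin 4 → ℂ, ∑ k, (c k) ^ 2 = 0 → ∑ k, (c k) ^ 2 * Complex.exp (2 * I * φ k) = 0) ↔
      ∀ k : Fin 4, ∃ n : ℤ, φ k - φ 0 = n * Real.pi := by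
  simp only [forall_sum_sq_eq_zero_imp_iff, ← exp_two_mul_I_eq_exp_iff]
  exact ⟨fun h k => h k 0, fun h j k => (h j).trans (h k).symm⟩
end

section
/- For each integer d ≥ 2 define Schmidt coefficients λ₁(d) = (1 − 1/√d)^{1/2} and λ_k(d) = (1/(√d(d−1)))^{1/2} for k = 2,…,d (these are the Schmidt coefficients of the state |η_d⟩ = λ₁|11⟩ + Σ_{k=2}^{d} λ_k|kk⟩, and Σ_{k=1}^{d} λ_k(d)² = 1). Then: (a) 2·log₂(Σ_{k=1}^{d} λ_k(d)) → ∞ as d → ∞ (equivalently Σ_k λ_k(d) → ∞), so the max-entanglement/log-robustness E_max(η_d) diverges; while (b) the entanglement entropy −Σ_{k=1}^{d} λ_k(d)² log₂(λ_k(d)²) → 0 as d → ∞. -/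
/-!
Write `s = √d`. The state has one Schmidt weight `1 - 1/s` and `d - 1` equal weights with total
`1/s`. Hence `Σ_k λ_k ≥ (d - 1) · √(1 / (s (d - 1))) = √((d - 1) / s) → ∞`, while the entropy
equals `(negMulLog (1 - 1/s) + log (s (d - 1)) / s) / log 2`: the first term vanishes by continuity
of `negMulLog` at `1`, the second because `log (s (d - 1)) ≤ 3 log s` grows slower than `s`.
-/

open Filter

noncomputable section

/-- The Schmidt coefficients of the state |η_d⟩: λ₁ = (1−1/√d)^{1/2} and
λ_k = (1/(√d(d−1)))^{1/2} for k = 2,…,d. -/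
def lam (d k : ℕ) : ℝ :=
  if k = 1 then Real.sqrt (1 - 1 / Real.sqrt d)
  else Real.sqrt (1 / (Real.sqrt d * ((d : ℝ) - 1)))

open Real Finset

theorem Finset.sum_Icc_one_eq_add_nsmul {M : Type*} [AddCommMonoid M] {d : ℕ} (hd : 1 ≤ d)
    (f : ℕ → M) {c : M} (hf : ∀ k ∈ Icc 2 d, f k = c) :
    ∑ k ∈ Icc 1 d, f k = f 1 + (d - 1) • c := by
  rw [← insert_Icc_add_one_left_eq_Icc hd, sum_insert (by simp)]
  exact congrArg _ ((sum_congr rfl hf).trans (by simp))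

theorem neg_sum_mul_logb_eq_sum_negMulLog_div {ι : Type*} (s : Finset ι) (f : ι → ℝ) (b : ℝ) :
    -∑ i ∈ s, f i * logb b (f i) = (∑ i ∈ s, negMulLog (f i)) / log b := by
  simp only [logb, negMulLog, sum_div, ← sum_neg_distrib]
  exact sum_congr rfl fun i _ => by ring

theorem negMulLog_one_div (x : ℝ) : negMulLog (1 / x) = log x / x := by
  rw [negMulLog, one_div, log_inv]
  ring

theorem tendsto_sqrt_natCast_atTop : Tendsto (fun d : ℕ => √(d : ℝ)) atTop atTop :=
  tendsto_sqrt_atTop.comp tendsto_natCast_atTop_atTop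

section EtaFamily

variable {d : ℕ}

theorem lam_one_sq (hd : 1 ≤ d) : lam d 1 ^ 2 = 1 - 1 / √d := by
  have : 1 / √d ≤ 1 := div_le_one_of_le₀ (one_le_sqrt.2 (by exact_mod_cast hd)) (sqrt_nonneg _)
  rw [lam, if_pos rfl, sq_sqrt (by linarith)]

theorem lam_of_ne_one {k : ℕ} (hk : k ≠ 1) : lam d k = √(1 / (√d * ((d : ℝ) - 1))) :=
  if_neg hk

theorem sum_Icc_one_lam_eq (hd : 1 ≤ d) (f : ℝ → ℝ) :
    ∑ k ∈ Icc 1 d, f (lam d k) =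
      f (lam d 1) + ((d : ℝ) - 1) * f (√(1 / (√d * ((d : ℝ) - 1)))) := by
  rw [sum_Icc_one_eq_add_nsmul hd _ fun k hk => by rw [lam_of_ne_one (by grind)], nsmul_eq_mul,
    Nat.cast_pred hd]

theorem sum_lam_sq (hd : 2 ≤ d) : ∑ k ∈ Icc 1 d, lam d k ^ 2 = 1 := by
  have hd' : (2 : ℝ) ≤ d := by exact_mod_cast hd
  have hs : 0 < √(d : ℝ) := sqrt_pos.2 (by linarith)
  have hd1 : (0 : ℝ) < d - 1 := by linarith
  rw [sum_Icc_one_lam_eq (by omega) (· ^ 2), lam_one_sq (by omega), sq_sqrt (by positivity)]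
  field_simp
  ring

theorem sqrt_sub_one_div_sqrt_le_sum_lam (hd : 2 ≤ d) :
    √(((d : ℝ) - 1) / √d) ≤ ∑ k ∈ Icc 1 d, lam d k := by
  have hd1 : (0 : ℝ) < d - 1 := by
    have : (2 : ℝ) ≤ d := by exact_mod_cast hd
    linarith
  rw [sum_Icc_one_lam_eq (by omega) fun x => x]
  calc √(((d : ℝ) - 1) / √d) = ((d : ℝ) - 1) * √(1 / (√d * ((d : ℝ) - 1))) := by
        rw [← sqrt_sq hd1.le, ← sqrt_mul (sq_nonneg _), sqrt_sq hd1.le]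
        congr 1
        field_simp
    _ ≤ _ := le_add_of_nonneg_left (sqrt_nonneg _)

theorem tendsto_sum_lam_atTop : Tendsto (fun d : ℕ => ∑ k ∈ Icc 1 d, lam d k) atTop atTop := by
  have hratio : Tendsto (fun d : ℕ => ((d : ℝ) - 1) / √d) atTop atTop := by
    refine (tendsto_sqrt_natCast_atTop.atTop_add
      (tendsto_inv_atTop_zero.comp tendsto_sqrt_natCast_atTop).neg).congr' ?_
    filter_upwards [eventually_ge_atTop 1] with d hd
    have : 0 < √(d : ℝ) := sqrt_pos.2 (by exact_mod_cast hd)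
    rw [Function.comp_apply, eq_div_iff this.ne', add_mul, neg_mul, inv_mul_cancel₀ this.ne',
      mul_self_sqrt (Nat.cast_nonneg _)]
    ring
  refine tendsto_atTop_mono' _ ?_ (tendsto_sqrt_atTop.comp hratio)
  filter_upwards [eventually_ge_atTop 2] with d hd
  exact sqrt_sub_one_div_sqrt_le_sum_lam hd

theorem neg_sum_lam_sq_mul_logb_eq (hd : 2 ≤ d) :
    -∑ k ∈ Icc 1 d, lam d k ^ 2 * logb 2 (lam d k ^ 2) =
      (negMulLog (1 - 1 / √d) + log (√d * ((d : ℝ) - 1)) / √d) / log 2 := by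
  have hd' : (2 : ℝ) ≤ d := by exact_mod_cast hd
  have hs : 0 < √(d : ℝ) := sqrt_pos.2 (by linarith)
  have hd1 : (0 : ℝ) < d - 1 := by linarith
  rw [neg_sum_mul_logb_eq_sum_negMulLog_div, sum_Icc_one_lam_eq (by omega) (negMulLog <| · ^ 2),
    lam_one_sq (by omega), sq_sqrt (by positivity), negMulLog_one_div]
  field_simp

theorem tendsto_negMulLog_one_sub_one_div_sqrt :
    Tendsto (fun d : ℕ => negMulLog (1 - 1 / √d)) atTop (nhds 0) := by
  have : Tendsto (fun d : ℕ => 1 - 1 / √(d : ℝ)) atTop (nhds 1) := by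
    simpa using tendsto_const_nhds.sub (tendsto_inv_atTop_zero.comp tendsto_sqrt_natCast_atTop)
  exact (continuous_negMulLog.tendsto' 1 0 negMulLog_one).comp this

theorem tendsto_log_sqrt_mul_sub_one_div_sqrt :
    Tendsto (fun d : ℕ => log (√d * ((d : ℝ) - 1)) / √d) atTop (nhds 0) := by
  have hupper : Tendsto (fun d : ℕ => 3 * (log √d / √d)) atTop (nhds 0) := by
    simpa using
      (isLittleO_log_id_atTop.tendsto_div_nhds_zero.comp tendsto_sqrt_natCast_atTop).const_mul 3
  refine tendsto_of_tendsto_of_tendsto_of_le_of_le' tendsto_const_nhds hupper ?_ ?_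
  all_goals filter_upwards [eventually_ge_atTop 2] with d hd
  all_goals have hd' : (2 : ℝ) ≤ d := by exact_mod_cast hd
  all_goals have hs : 1 ≤ √(d : ℝ) := one_le_sqrt.2 (by linarith)
  · exact div_nonneg (log_nonneg (by nlinarith)) (by linarith)
  · rw [← mul_div_assoc]
    gcongr
    calc log (√d * ((d : ℝ) - 1)) ≤ log (√d ^ 3) := by
          gcongr
          · nlinarith
          · nlinarith [sq_sqrt (Nat.cast_nonneg d)]
      _ = 3 * log √d := by rw [log_pow]; norm_num

end EtaFamily

/-- The family |η_d⟩ is normalized, its max-entanglement (log-robustness)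
2log₂(Σ_k λ_k(d)) diverges as d → ∞, while its entanglement entropy
−Σ_k λ_k(d)² log₂ λ_k(d)² tends to 0. -/
theorem eta_family_Emax_diverges_entropy_vanishes :
    (∀ d : ℕ, 2 ≤ d → ∑ k ∈ Finset.Icc 1 d, (lam d k) ^ 2 = 1) ∧
    Tendsto (fun d : ℕ => 2 * Real.logb 2 (∑ k ∈ Finset.Icc 1 d, lam d k))
      atTop atTop ∧
    Tendsto (fun d : ℕ => -∑ k ∈ Finset.Icc 1 d, (lam d k) ^ 2 * Real.logb 2 ((lam d k) ^ 2))
      atTop (nhds 0) := by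
  refine ⟨fun d hd => sum_lam_sq hd,
    ((tendsto_logb_atTop one_lt_two).comp tendsto_sum_lam_atTop).const_mul_atTop two_pos, ?_⟩
  have hentropy := (tendsto_negMulLog_one_sub_one_div_sqrt.add
    tendsto_log_sqrt_mul_sub_one_div_sqrt).div_const (log 2)
  rw [add_zero, zero_div] at hentropy
  refine hentropy.congr' ?_
  filter_upwards [eventually_ge_atTop 2] with d hd
  rw [neg_sum_lam_sq_mul_logb_eq hd]

end
end
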